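/- arXiv:2308.01733 — 2 statements merged into one kernel-verified Lean document; each statement's English description precedes it below -/
import Mathlib

section
/- In the setting of the previous statement, assume additionally that $b$ satisfies the inf–sup condition $\sup_{v \in V\setminus\{0\}} b(v,q)/\|v\|_V \ge \beta \|q\|_Q$ for all $q \in Q$ with $\beta > 0$, that $a$ has continuity constant $C_a$ and $\tilde c$ continuity constant $C_c$. Then the pressure satisfies $\|p\|_Q \le \frac{1}{\beta}\left[\left(1 + \frac{1}{\alpha}\left(\frac{C_m}{\Delta t} + C_a\right)\right)R + \frac{C_c}{\alpha^2} R^2\right]$, where $R := \frac{C_m}{\Delta t}\|u_{old}\|_V + \|F\|_{V'}$. -/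
set_option maxHeartbeats 1000000 in
/-- abstract backward-Euler a priori pressure estimate via the
inf–sup condition:
`‖p‖ ≤ (1/β) [ (1 + (C_m/Δt + C_a)/α) R + (C_c/α²) R² ]` with
`R = C_m/Δt ‖u_old‖ + ‖F‖`. -/
theorem backwardEuler_pressure_estimate
    {V Q : Type*} [NormedAddCommGroup V] [InnerProductSpace ℝ V] [CompleteSpace V]
    [NormedAddCommGroup Q] [InnerProductSpace ℝ Q] [CompleteSpace Q]
    (Δt α β Cm Ca Cc : ℝ) (hΔt : 0 < Δt) (hα : 0 < α) (hβ : 0 < β)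
    (m a : V →L[ℝ] V →L[ℝ] ℝ)
    (c : V →L[ℝ] V →L[ℝ] V →L[ℝ] ℝ)
    (b : V →L[ℝ] Q →L[ℝ] ℝ)
    (hm_nonneg : ∀ v : V, 0 ≤ m v v)
    (hm_bound : ∀ w v : V, |m w v| ≤ Cm * ‖w‖ * ‖v‖)
    (ha_coercive : ∀ v : V, α * ‖v‖ ^ 2 ≤ a v v)
    (ha_bound : ∀ w v : V, |a w v| ≤ Ca * ‖w‖ * ‖v‖)
    (hc_skew : ∀ u v : V, c u v v = 0)
    (hc_bound : ∀ u w v : V, |c u w v| ≤ Cc * ‖u‖ * ‖w‖ * ‖v‖)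
    -- inf–sup condition: `sup_{v ≠ 0} b(v,q)/‖v‖ ≥ β ‖q‖`
    (hinfsup : ∀ q : Q, β * ‖q‖ ≤ ‖b.flip q‖)
    (F : V →L[ℝ] ℝ) (u uold : V) (p : Q)
    (hstate : ∀ v : V,
      (1 / Δt) * m (u - uold) v + a u v + c u u v + b v p = F v)
    (hdivfree : ∀ q : Q, b u q = 0) :
    ‖p‖ ≤ (1 / β) *
      ((1 + (1 / α) * (Cm / Δt + Ca)) * ((Cm / Δt) * ‖uold‖ + ‖F‖)
        + (Cc / α ^ 2) * ((Cm / Δt) * ‖uold‖ + ‖F‖) ^ 2) := by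
  by_cases hV : ∃ v : V, v ≠ 0
  · obtain ⟨v₀, hv₀⟩ := hV
    have hv₀n : 0 < ‖v₀‖ := norm_pos_iff.mpr hv₀
    have hCm : 0 ≤ Cm := by
      nlinarith [hm_bound v₀ v₀, abs_nonneg (m v₀ v₀), mul_pos hv₀n hv₀n]
    have hCa : 0 ≤ Ca := by
      nlinarith [ha_bound v₀ v₀, abs_nonneg (a v₀ v₀), mul_pos hv₀n hv₀n]
    have hCc : 0 ≤ Cc := by
      nlinarith [hc_bound v₀ v₀ v₀, abs_nonneg (c v₀ v₀ v₀), mul_pos hv₀n hv₀n,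
        mul_pos (mul_pos hv₀n hv₀n) hv₀n]
    set R : ℝ := (Cm / Δt) * ‖uold‖ + ‖F‖ with hRdef
    have hR : 0 ≤ R := by positivity
    have h3 : (0:ℝ) < 1 / Δt := by positivity
    -- velocity estimate
    have hmsub : ∀ v : V, m (u - uold) v = m u v - m uold v := by
      intro v; rw [map_sub]; rfl
    have hstu := hstate u
    rw [hc_skew u u, hdivfree p, hmsub u] at hstu
    have hFu : F u ≤ ‖F‖ * ‖u‖ := by
      have := F.le_opNorm u
      rw [Real.norm_eq_abs] at this
      exact (le_abs_self _).trans this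
    have hmou : m uold u ≤ Cm * ‖uold‖ * ‖u‖ :=
      (le_abs_self _).trans (hm_bound uold u)
    have hkey : α * ‖u‖ ^ 2 ≤ R * ‖u‖ := by
      have e : R * ‖u‖ = 1 / Δt * (Cm * ‖uold‖ * ‖u‖) + ‖F‖ * ‖u‖ := by
        rw [hRdef]; field_simp
      rw [e]
      linarith [ha_coercive u, hstu, hFu,
        mul_nonneg h3.le (hm_nonneg u),
        mul_le_mul_of_nonneg_left hmou h3.le]
    have hu : α * ‖u‖ ≤ R := by
      rcases eq_or_lt_of_le (norm_nonneg u) with h | h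
      · simp [← h, hR]
      · nlinarith
    -- pressure estimate
    set K : ℝ := ‖F‖ + (Cm / Δt) * ‖u‖ + (Cm / Δt) * ‖uold‖ + Ca * ‖u‖ + Cc * ‖u‖ ^ 2
      with hKdef
    have hK : 0 ≤ K := by positivity
    have hbnd : ‖b.flip p‖ ≤ K := by
      apply ContinuousLinearMap.opNorm_le_bound _ hK
      intro v
      have hbv : b v p = F v - (1 / Δt) * (m u v - m uold v) - a u v - c u u v := by
        have := hstate v
        rw [hmsub v] at this
        linarith
      have e1 : |F v| ≤ ‖F‖ * ‖v‖ := by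
        have := F.le_opNorm v; rwa [Real.norm_eq_abs] at this
      have e2 := hm_bound u v
      have e3 := hm_bound uold v
      have e4 := ha_bound u v
      have e5 := hc_bound u u v
      have hfl : ‖(b.flip p) v‖ = |b v p| := by
        simp [ContinuousLinearMap.flip_apply, Real.norm_eq_abs]
      rw [hfl, hbv]
      have t1 : |(1 / Δt) * (m u v - m uold v)|
          ≤ (1 / Δt) * (Cm * ‖u‖ * ‖v‖ + Cm * ‖uold‖ * ‖v‖) := by
        rw [abs_mul, abs_of_pos h3]
        exact mul_le_mul_of_nonneg_left ((abs_sub _ _).trans (add_le_add e2 e3)) h3.le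
      have t2 : |F v - (1 / Δt) * (m u v - m uold v) - a u v - c u u v|
          ≤ |F v| + |(1 / Δt) * (m u v - m uold v)| + |a u v| + |c u u v| := by
        have s1 := abs_sub (F v - (1 / Δt) * (m u v - m uold v) - a u v) (c u u v)
        have s2 := abs_sub (F v - (1 / Δt) * (m u v - m uold v)) (a u v)
        have s3 := abs_sub (F v) ((1 / Δt) * (m u v - m uold v))
        linarith
      have eK : K * ‖v‖ = ‖F‖ * ‖v‖ + (1 / Δt) * (Cm * ‖u‖ * ‖v‖ + Cm * ‖uold‖ * ‖v‖)
          + Ca * ‖u‖ * ‖v‖ + Cc * ‖u‖ ^ 2 * ‖v‖ := by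
        rw [hKdef]; field_simp; ring
      rw [eK]
      linarith [t1, t2, e1, e4, e5]
    have hβp : β * ‖p‖ ≤ K := (hinfsup p).trans hbnd
    have hKR : K ≤ (1 + (1 / α) * (Cm / Δt + Ca)) * R + (Cc / α ^ 2) * R ^ 2 := by
      have hu2 : ‖u‖ ≤ R / α := by
        rw [le_div_iff₀ hα]; linarith [hu]
      have hsq : ‖u‖ ^ 2 ≤ (R / α) ^ 2 := pow_le_pow_left₀ (norm_nonneg u) hu2 2
      have hCmΔt : 0 ≤ Cm / Δt := by positivity
      have h1 : (Cm / Δt) * ‖u‖ ≤ (Cm / Δt) * (R / α) :=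
        mul_le_mul_of_nonneg_left hu2 hCmΔt
      have h2 : Ca * ‖u‖ ≤ Ca * (R / α) := mul_le_mul_of_nonneg_left hu2 hCa
      have h3' : Cc * ‖u‖ ^ 2 ≤ Cc * (R / α) ^ 2 := mul_le_mul_of_nonneg_left hsq hCc
      have egoal : (1 + (1 / α) * (Cm / Δt + Ca)) * R + (Cc / α ^ 2) * R ^ 2
          = R + (Cm / Δt) * (R / α) + Ca * (R / α) + Cc * (R / α) ^ 2 := by
        field_simp; ring
      rw [hKdef, egoal]
      linarith [h1, h2, h3']
    have hfin : β * ‖p‖ ≤ β * ((1 / β) *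
        ((1 + (1 / α) * (Cm / Δt + Ca)) * R + (Cc / α ^ 2) * R ^ 2)) := by
      rw [← mul_assoc, mul_one_div, div_self hβ.ne', one_mul]
      exact hβp.trans hKR
    exact le_of_mul_le_mul_left hfin hβ
  · push_neg at hV
    have hF0 : ‖F‖ = 0 := by
      refine le_antisymm ?_ (norm_nonneg _)
      apply ContinuousLinearMap.opNorm_le_bound _ le_rfl
      intro v; rw [hV v]; simp
    have hbp : ‖b.flip p‖ = 0 := by
      refine le_antisymm ?_ (norm_nonneg _)
      apply ContinuousLinearMap.opNorm_le_bound _ le_rfl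
      intro v; rw [hV v]; simp
    have hp : ‖p‖ ≤ 0 := by
      have := hinfsup p
      rw [hbp] at this
      nlinarith [norm_nonneg p]
    have hR0 : (Cm / Δt) * ‖uold‖ + ‖F‖ = 0 := by
      rw [hV uold, norm_zero, hF0]; ring
    rw [hR0]
    have hz : (1 / β) * ((1 + (1 / α) * (Cm / Δt + Ca)) * 0 + (Cc / α ^ 2) * 0 ^ 2)
        = (0:ℝ) := by ring
    rw [hz]
    exact hp
end

section
/- Let $V$ be a real Hilbert space, $A$ a bounded coercive bilinear form on $V$ with constant $\alpha > 0$, and $\tilde c$ a bounded trilinear form with $\tilde c(u,v,v) = 0$ for all $u,v \in V$ and continuity constant $C_c$. For $F_1, F_2 \in V'$ let $u_1, u_2 \in V$ solve $A(u_i,v) + \tilde c(u_i,u_i,v) = F_i(v)$ for all $v \in V$, $i = 1,2$, and assume $C_c \|F_2\|_{V'} < \alpha^2$. Then $\|u_1 - u_2\|_V \le \frac{\|F_1 - F_2\|_{V'}}{\alpha - C_c\|F_2\|_{V'}/\alpha}$, i.e. the solution map depends Lipschitz-continuously on the data under the small-data condition. -/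
/-- Lipschitz dependence of the solution on the data under the
small-data condition:
`‖u₁ - u₂‖ ≤ ‖F₁ - F₂‖ / (α - C_c‖F₂‖/α)`. -/
theorem small_data_stability
    {V : Type*} [NormedAddCommGroup V] [InnerProductSpace ℝ V] [CompleteSpace V]
    (A : V →L[ℝ] V →L[ℝ] ℝ) (c : V →L[ℝ] V →L[ℝ] V →L[ℝ] ℝ)
    (α Cc : ℝ) (hα : 0 < α)
    (hA_coercive : ∀ v : V, α * ‖v‖ ^ 2 ≤ A v v)
    (hc_skew : ∀ u v : V, c u v v = 0)
    (hc_bound : ∀ u w v : V, |c u w v| ≤ Cc * ‖u‖ * ‖w‖ * ‖v‖)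
    (F₁ F₂ : V →L[ℝ] ℝ) (u₁ u₂ : V)
    (hu₁ : ∀ v : V, A u₁ v + c u₁ u₁ v = F₁ v)
    (hu₂ : ∀ v : V, A u₂ v + c u₂ u₂ v = F₂ v)
    (hsmall : Cc * ‖F₂‖ < α ^ 2) :
    ‖u₁ - u₂‖ ≤ ‖F₁ - F₂‖ / (α - Cc * ‖F₂‖ / α) := by
  set e := u₁ - u₂ with he_def
  have hD : 0 < α - Cc * ‖F₂‖ / α := by
    rw [sub_pos, div_lt_iff₀ hα]
    calc Cc * ‖F₂‖ < α ^ 2 := hsmall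
      _ = α * α := sq α
  by_cases he : e = 0
  · rw [he, norm_zero]
    positivity
  have hne : 0 < ‖e‖ := norm_pos_iff.mpr he
  -- key bound: Cc * ‖u₂‖ ≤ Cc * ‖F₂‖ / α
  have hkey : Cc * ‖u₂‖ ≤ Cc * ‖F₂‖ / α := by
    rcases le_or_gt 0 Cc with hCc | hCc
    · have hub : ‖u₂‖ ≤ ‖F₂‖ / α := by
        by_cases hz : u₂ = 0
        · simp [hz]
          positivity
        have h2 : α * ‖u₂‖ ^ 2 ≤ ‖F₂‖ * ‖u₂‖ := by
          calc α * ‖u₂‖ ^ 2 ≤ A u₂ u₂ := hA_coercive u₂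
            _ = F₂ u₂ := by
              have := hu₂ u₂
              rw [hc_skew] at this
              linarith
            _ ≤ ‖F₂‖ * ‖u₂‖ := le_trans (le_abs_self _) (by simpa using F₂.le_opNorm u₂)
        have hn : 0 < ‖u₂‖ := norm_pos_iff.mpr hz
        rw [le_div_iff₀ hα]
        nlinarith
      calc Cc * ‖u₂‖ ≤ Cc * (‖F₂‖ / α) := by
            exact mul_le_mul_of_nonneg_left hub hCc
        _ = Cc * ‖F₂‖ / α := by ring
    · -- Cc < 0 forces u₂ = 0 and F₂ = 0
      have hz : u₂ = 0 := by
        by_contra hz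
        have hn : 0 < ‖u₂‖ := norm_pos_iff.mpr hz
        have h1 : (0 : ℝ) ≤ |c u₂ u₂ u₂| := abs_nonneg _
        have h2 := hc_bound u₂ u₂ u₂
        have h3 : Cc * ‖u₂‖ * ‖u₂‖ * ‖u₂‖ < 0 := by
          have h4 := mul_pos (mul_pos hn hn) hn
          nlinarith
        linarith
      have hF : F₂ = 0 := by
        ext v
        have := hu₂ v
        simp [hz] at this
        simp [← this]
      simp [hz, hF]
  -- the difference equation tested with e
  have hc1 : c u₁ u₁ e = c u₁ u₂ e := by
    have hu : u₁ = u₂ + e := by simp [he_def]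
    calc c u₁ u₁ e = c u₁ (u₂ + e) e := by rw [← hu]
      _ = c u₁ u₂ e + c u₁ e e := by rw [map_add]; rfl
      _ = c u₁ u₂ e := by rw [hc_skew, add_zero]
  have hc2 : c u₁ u₂ e - c u₂ u₂ e = c e u₂ e := by
    simp only [he_def, map_sub, ContinuousLinearMap.sub_apply]
    ring
  have hAee : A e e = (F₁ e - F₂ e) - c e u₂ e := by
    have h1 := hu₁ e
    have h2 := hu₂ e
    have hsplit : A e e = A u₁ e - A u₂ e := by
      simp only [he_def, map_sub, ContinuousLinearMap.sub_apply]
      ring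
    rw [hsplit, ← hc2, ← hc1]
    linarith
  have hmain : α * ‖e‖ ^ 2 ≤ ‖F₁ - F₂‖ * ‖e‖ + Cc * ‖u₂‖ * ‖e‖ ^ 2 := by
    have h1 : α * ‖e‖ ^ 2 ≤ A e e := hA_coercive e
    have h2 : F₁ e - F₂ e ≤ ‖F₁ - F₂‖ * ‖e‖ := by
      calc F₁ e - F₂ e = (F₁ - F₂) e := rfl
        _ ≤ |(F₁ - F₂) e| := le_abs_self _
        _ = ‖(F₁ - F₂) e‖ := rfl
        _ ≤ ‖F₁ - F₂‖ * ‖e‖ := (F₁ - F₂).le_opNorm e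
    have h3 : -c e u₂ e ≤ Cc * ‖e‖ * ‖u₂‖ * ‖e‖ := by
      calc -c e u₂ e ≤ |c e u₂ e| := neg_le_abs _
        _ ≤ Cc * ‖e‖ * ‖u₂‖ * ‖e‖ := hc_bound e u₂ e
    nlinarith [hAee]
  -- conclude
  rw [le_div_iff₀ hD]
  have hstep : (α - Cc * ‖F₂‖ / α) * ‖e‖ ^ 2 ≤ ‖F₁ - F₂‖ * ‖e‖ := by
    nlinarith [sq_nonneg ‖e‖]
  nlinarith
end
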